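/- Let 0 < q_{l,0} < q_{h,0} ≤ q_h, set ρ = q_{l,0}/q_{h,0}, and define q̂ = 4·q_h − ((4 − ρ)²/(2·(1 − ρ)))·(q_h²/q_{h,0} − √(q_h⁴/q_{h,0}² − (12·(1 − ρ)/(4 − ρ)²)·q_h³/q_{h,0})). Then for every q_l with 0 ≤ q_l ≤ q̂ and q_l < q_h, one has U_h(q_l, q_h) ≥ U_h(q_{l,0}, q_{h,0}). -/

import Mathlib

/-- High-quality firm's equilibrium utility. -/
noncomputable def Uh (ql qh : ℝ) : ℝ := 4 * qh ^ 2 * (qh - ql) / (4 * qh - ql) ^ 2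

/-!
Put `c = U_h(q_{l,0}, q_{h,0})` and `y = 4 q_h - q_l`. Since `q_h - q_l = y - 3 q_h`, the inequality
`U_h(q_l, q_h) ≥ c` says exactly that `y` lies between the roots of `c y² - 4 q_h² y + 12 q_h³`,
and `q̂` is `4 q_h` minus the smaller root. The condition `q_l ≤ q̂` is the lower bound on `y`;
the upper bound follows from `q_l ≥ 0` because `c ≤ q_{h,0}/4 ≤ q_h/4` puts the larger root beyond
`4 q_h`.
-/

theorem quadratic_nonpos_of_mem_Icc {K : Type*} [Field K] [LinearOrder K] [IsStrictOrderedRing K]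
    {a b c s x : K} (ha : 0 < a) (h : discrim a b c = s * s)
    (hx : x ∈ Set.Icc ((-b - s) / (2 * a)) ((-b + s) / (2 * a))) :
    a * (x * x) + b * x + c ≤ 0 := by
  obtain ⟨hlo, hhi⟩ := hx
  rw [div_le_iff₀ (by positivity)] at hlo
  rw [le_div_iff₀ (by positivity)] at hhi
  have hfactor : 4 * a * (a * (x * x) + b * x + c) = (2 * a * x + b - s) * (2 * a * x + b + s) := by
    rw [discrim] at h
    linear_combination -h
  have hprod : (2 * a * x + b - s) * (2 * a * x + b + s) ≤ 0 :=
    mul_nonpos_of_nonpos_of_nonneg (by linarith) (by linarith)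
  nlinarith

theorem Uh_pos {ql qh : ℝ} (hqh : 0 < qh) (hlt : ql < qh) : 0 < Uh ql qh := by
  unfold Uh
  have : 0 < 4 * qh - ql := by linarith
  positivity

theorem Uh_le_quarter {ql qh : ℝ} (hql : 0 ≤ ql) (hqh : 0 ≤ qh) : Uh ql qh ≤ qh / 4 := by
  unfold Uh
  refine div_le_of_le_mul₀ (sq_nonneg _) (by positivity) ?_
  nlinarith [mul_nonneg (mul_nonneg hql hqh) (add_nonneg hql hqh)]

theorem le_Uh_of_quadratic_nonpos {c ql qh : ℝ} (hqh : 0 < qh) (hc : 0 ≤ c)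
    (h : c * ((4 * qh - ql) * (4 * qh - ql)) + (-4 * qh ^ 2) * (4 * qh - ql) + 12 * qh ^ 3 ≤ 0) :
    c ≤ Uh ql qh := by
  have hy : 0 < 4 * qh - ql := by
    by_contra! hy
    nlinarith [mul_nonneg hc (mul_self_nonneg (4 * qh - ql)), pow_pos hqh 3,
      mul_nonneg (sq_nonneg qh) (neg_nonneg.2 hy)]
  unfold Uh
  rw [le_div_iff₀ (by positivity)]
  linarith

theorem ratio_coeff_eq_div_Uh {ql0 qh0 : ℝ} (hqh0 : qh0 ≠ 0) (hne : ql0 ≠ qh0)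
    (hne4 : ql0 ≠ 4 * qh0) :
    (4 - ql0 / qh0) ^ 2 / (2 * (1 - ql0 / qh0)) = 2 * qh0 / Uh ql0 qh0 := by
  have : qh0 - ql0 ≠ 0 := sub_ne_zero.2 hne.symm
  have : 4 * qh0 - ql0 ≠ 0 := sub_ne_zero.2 hne4.symm
  unfold Uh
  field_simp
  ring

theorem ratio_radicand_coeff_eq_Uh {ql0 qh0 : ℝ} (hqh0 : qh0 ≠ 0) (hne4 : ql0 ≠ 4 * qh0) :
    12 * (1 - ql0 / qh0) / (4 - ql0 / qh0) ^ 2 = 3 * Uh ql0 qh0 / qh0 := by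
  have : 4 * qh0 - ql0 ≠ 0 := sub_ne_zero.2 hne4.symm
  unfold Uh
  field_simp
  ring

theorem discrim_threshold_quadratic {c qh0 qh : ℝ} (hqh0 : qh0 ≠ 0) (hqh : 0 ≤ qh)
    (hc : 3 * c ≤ qh) :
    discrim c (-4 * qh ^ 2) (12 * qh ^ 3) =
      (4 * qh0 * √(qh ^ 4 / qh0 ^ 2 - 3 * c / qh0 * qh ^ 3 / qh0)) *
        (4 * qh0 * √(qh ^ 4 / qh0 ^ 2 - 3 * c / qh0 * qh ^ 3 / qh0)) := by
  have hD : qh ^ 4 / qh0 ^ 2 - 3 * c / qh0 * qh ^ 3 / qh0 = qh ^ 3 * (qh - 3 * c) / qh0 ^ 2 := by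
    field_simp
  have hD0 : 0 ≤ qh ^ 3 * (qh - 3 * c) / qh0 ^ 2 := by
    have : 0 ≤ qh - 3 * c := by linarith
    positivity
  rw [mul_mul_mul_comm, Real.mul_self_sqrt (hD ▸ hD0), hD, discrim]
  field_simp
  ring

/-- with `ρ = q_{l,0}/q_{h,0}` and
`q̂ = 4·q_h − ((4 − ρ)²/(2·(1 − ρ)))·(q_h²/q_{h,0} − √(q_h⁴/q_{h,0}² − (12·(1 − ρ)/(4 − ρ)²)·q_h³/q_{h,0}))`,
any `q_l ∈ [0, q̂]` with `q_l < q_h` keeps the high-quality firm's revenue at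
least its initial value. -/
theorem high_firm_no_revenue_loss_threshold
    (ql0 qh0 qh : ℝ) (hql0 : 0 < ql0) (h0 : ql0 < qh0) (hh : qh0 ≤ qh) :
    ∀ ql : ℝ, 0 ≤ ql →
      ql ≤ 4 * qh - ((4 - ql0 / qh0) ^ 2 / (2 * (1 - ql0 / qh0))) *
        (qh ^ 2 / qh0 - Real.sqrt (qh ^ 4 / qh0 ^ 2 -
          (12 * (1 - ql0 / qh0) / (4 - ql0 / qh0) ^ 2) * qh ^ 3 / qh0)) →
      ql < qh →
      Uh ql qh ≥ Uh ql0 qh0 := by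
  intro ql hql hq _
  have hqh0 : 0 < qh0 := hql0.trans h0
  have hqh : 0 < qh := hqh0.trans_le hh
  rw [ratio_coeff_eq_div_Uh hqh0.ne' h0.ne (by linarith),
    ratio_radicand_coeff_eq_Uh hqh0.ne' (by linarith)] at hq
  set c := Uh ql0 qh0
  have hc : 0 < c := Uh_pos hqh0 h0
  have hc4 : c ≤ qh / 4 := (Uh_le_quarter hql0.le hqh0.le).trans (by linarith)
  set D := qh ^ 4 / qh0 ^ 2 - 3 * c / qh0 * qh ^ 3 / qh0
  have hs := discrim_threshold_quadratic hqh0.ne' hqh.le (by linarith : 3 * c ≤ qh)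
  set s := 4 * qh0 * √D
  have hroot : (-(-4 * qh ^ 2) - s) / (2 * c) = 2 * qh0 / c * (qh ^ 2 / qh0 - √D) := by
    field_simp
    ring
  apply le_Uh_of_quadratic_nonpos hqh hc.le
  refine quadratic_nonpos_of_mem_Icc hc hs ⟨by rw [hroot]; linarith, ?_⟩
  rw [le_div_iff₀ (by positivity)]
  nlinarith [mul_nonneg hql hc.le, show 0 ≤ s by positivity]
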